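/- Let μ ≥ 2 be an even integer, ζ > 0, V > 0, and set c₀ = cos²(π/μ)·ζ/V². Let f_Y(y) = (1/π)·√(V²/(ζy − V²y²)) for y ∈ (0, ζ/V²) (zero elsewhere) with CDF F_Y(Y) = ∫_0^Y f_Y(y) dy, and let f_α(α) = (μ/(2π))·√(V²/(ζα − V²α²)) for α ∈ (c₀, ζ/V²) (zero elsewhere) with CDF F_α(Y) = ∫_0^Y f_α(y) dy. Then: (i) for 0 < Y ≤ c₀, F_Y(Y) − F_α(Y) = ∫_0^Y f_Y(y) dy; (ii) for c₀ < Y < ζ/V², F_Y(Y) − F_α(Y) = (μ/2 − 1)·∫_Y^{ζ/V²} f_Y(y) dy; and in both cases F_Y(Y) − F_α(Y) ≥ 0. -/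

import Mathlib

/-!
Write `b = ζ/V²`. The interference density is the arcsine density `1/(π√(y(b - y)))` on
`(0, b)`, whose CDF is `G(y) = 1/2 + arcsin(2y/b - 1)/π`; the signal density is `μ/2` times
it on `(c₀, b)`. Since `2cos²(π/μ) - 1 = cos(2π/μ)`, `G(c₀) = 1 - 2/μ`, so for `Y > c₀`
`F_α(Y) = (μ/2)(G(Y) - 1 + 2/μ)` and `F_Y(Y) - F_α(Y) = (μ/2 - 1)(1 - G(Y))`.
Integrability of the density, singular at both endpoints, comes for free: it is the
nonnegative derivative of the continuous function `G`.
-/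

open Real

/-- Density of the per-user CUMA interference power (Corollary 1):
`(1/π)·√(V²/(ζy − V²y²))` on `(0, ζ/V²)` and `0` otherwise. -/
noncomputable def interferenceDensity (ζ V y : ℝ) : ℝ :=
  if y ∈ Set.Ioo 0 (ζ / V ^ 2)
  then 1 / π * Real.sqrt (V ^ 2 / (ζ * y - V ^ 2 * y ^ 2))
  else 0

/-- Density of the received CUMA signal power (Theorem 2):
`(μ/(2π))·√(V²/(ζα − V²α²))` on `(cos²(π/μ)ζ/V², ζ/V²)` and `0` otherwise. -/
noncomputable def signalDensity (μ : ℕ) (ζ V α : ℝ) : ℝ :=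
  if α ∈ Set.Ioo (Real.cos (π / μ) ^ 2 * ζ / V ^ 2) (ζ / V ^ 2)
  then μ / (2 * π) * Real.sqrt (V ^ 2 / (ζ * α - V ^ 2 * α ^ 2))
  else 0

open MeasureTheory Set

noncomputable def arcsineCDF (b y : ℝ) : ℝ := 1 / 2 + arcsin (2 * y / b - 1) / π

section arcsine

variable {b : ℝ}

theorem continuous_arcsineCDF (b : ℝ) : Continuous (arcsineCDF b) := by
  unfold arcsineCDF
  fun_prop

theorem arcsineCDF_zero (b : ℝ) : arcsineCDF b 0 = 0 := by
  norm_num [arcsineCDF, neg_div, div_div_cancel_left' pi_ne_zero]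

theorem arcsineCDF_self (hb : b ≠ 0) : arcsineCDF b b = 1 := by
  rw [arcsineCDF, mul_div_assoc, div_self hb]
  norm_num [div_div_cancel_left' pi_ne_zero]

theorem arcsineCDF_cos_sq_mul (hb : b ≠ 0) {θ : ℝ} (hθ₀ : 0 ≤ θ) (hθ : θ ≤ π / 2) :
    arcsineCDF b (cos θ ^ 2 * b) = 1 - 2 * θ / π := by
  have h2θ : 2 * (cos θ ^ 2 * b) / b - 1 = cos (2 * θ) := by
    rw [cos_two_mul]
    field_simp
  rw [arcsineCDF, h2θ, arcsin_eq_pi_div_two_sub_arccos, arccos_cos (by linarith) (by linarith)]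
  field_simp
  ring

theorem hasDerivAt_arcsineCDF {y : ℝ} (hy : y ∈ Ioo 0 b) :
    HasDerivAt (arcsineCDF b) (1 / (π * √(y * (b - y)))) y := by
  obtain ⟨hy₀, hyb⟩ := hy
  have hb : 0 < b := hy₀.trans hyb
  have hsq : 1 - (2 * y / b - 1) ^ 2 = (2 / b) ^ 2 * (y * (b - y)) := by
    field_simp
    ring
  have hpos : 0 < 1 - (2 * y / b - 1) ^ 2 := by
    rw [hsq]
    exact mul_pos (by positivity) (mul_pos hy₀ (sub_pos.2 hyb))
  have hlt : |2 * y / b - 1| < 1 := by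
    rw [← sq_lt_one_iff_abs_lt_one]
    linarith
  have hinner : HasDerivAt (fun y => 2 * y / b - 1) (2 / b) y := by
    simpa using ((hasDerivAt_id y).const_mul 2).div_const b |>.sub_const 1
  have h := ((hasDerivAt_arcsin (abs_lt.1 hlt).1.ne' (abs_lt.1 hlt).2.ne).comp y hinner).div_const π
    |>.const_add (1 / 2)
  refine h.congr_deriv ?_
  rw [hsq, sqrt_mul (by positivity), sqrt_sq (by positivity)]
  field_simp

end arcsine

section interference

variable {ζ V : ℝ}

theorem interferenceDensity_of_mem (hV : V ≠ 0) {y : ℝ} (hy : y ∈ Ioo 0 (ζ / V ^ 2)) :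
    interferenceDensity ζ V y = 1 / (π * √(y * (ζ / V ^ 2 - y))) := by
  have hquad : ζ * y - V ^ 2 * y ^ 2 = V ^ 2 * (y * (ζ / V ^ 2 - y)) := by
    field_simp
  rw [interferenceDensity, if_pos hy, hquad, div_mul_cancel_left₀ (by positivity), sqrt_inv]
  ring

theorem interferenceDensity_nonneg (ζ V y : ℝ) : 0 ≤ interferenceDensity ζ V y := by
  unfold interferenceDensity
  split_ifs
  · positivity
  · exact le_rfl

theorem support_interferenceDensity_subset (ζ V : ℝ) :
    Function.support (interferenceDensity ζ V) ⊆ Ioo 0 (ζ / V ^ 2) := by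
  intro y hy
  by_contra hy'
  exact hy (if_neg hy')

theorem hasDerivAt_arcsineCDF_interferenceDensity (hV : V ≠ 0) {y : ℝ}
    (hy : y ∈ Ioo 0 (ζ / V ^ 2)) :
    HasDerivAt (arcsineCDF (ζ / V ^ 2)) (interferenceDensity ζ V y) y := by
  rw [interferenceDensity_of_mem hV hy]
  exact hasDerivAt_arcsineCDF hy

theorem integrable_interferenceDensity (hV : V ≠ 0) : Integrable (interferenceDensity ζ V) := by
  have hIoc : IntegrableOn (interferenceDensity ζ V) (Ioc 0 (ζ / V ^ 2)) :=
    intervalIntegral.integrableOn_deriv_of_nonneg (continuous_arcsineCDF _).continuousOn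
      (fun _ hy => hasDerivAt_arcsineCDF_interferenceDensity hV hy)
      (fun y _ => interferenceDensity_nonneg ζ V y)
  exact (integrableOn_iff_integrable_of_support_subset
    ((support_interferenceDensity_subset ζ V).trans Ioo_subset_Ioc_self)).1 hIoc

theorem integral_interferenceDensity (hV : V ≠ 0) {Y₁ Y₂ : ℝ} (h₀ : 0 ≤ Y₁) (h₁₂ : Y₁ ≤ Y₂)
    (h₂ : Y₂ ≤ ζ / V ^ 2) :
    ∫ y in Y₁..Y₂, interferenceDensity ζ V y
      = arcsineCDF (ζ / V ^ 2) Y₂ - arcsineCDF (ζ / V ^ 2) Y₁ :=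
  intervalIntegral.integral_eq_sub_of_hasDerivAt_of_le h₁₂
    (continuous_arcsineCDF _).continuousOn
    (fun _ hy => hasDerivAt_arcsineCDF_interferenceDensity hV
      ⟨h₀.trans_lt hy.1, hy.2.trans_le h₂⟩)
    (integrable_interferenceDensity hV).intervalIntegrable

end interference

section signal

variable {μ : ℕ} {ζ V : ℝ}

theorem signalDensity_eq_indicator (hζ : 0 ≤ ζ) :
    signalDensity μ ζ V = (Ioo (cos (π / μ) ^ 2 * ζ / V ^ 2) (ζ / V ^ 2)).indicator
      fun y => (μ : ℝ) / 2 * interferenceDensity ζ V y := by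
  have hc₀ : 0 ≤ cos (π / μ) ^ 2 * ζ / V ^ 2 := by positivity
  funext y
  rw [indicator_apply, signalDensity]
  split_ifs with hy
  · rw [interferenceDensity, if_pos ⟨hc₀.trans_lt hy.1, hy.2⟩]
    ring
  · rfl

theorem integral_signalDensity_of_le {Y : ℝ} (hY₀ : 0 ≤ Y)
    (hY : Y ≤ cos (π / μ) ^ 2 * ζ / V ^ 2) :
    ∫ y in (0 : ℝ)..Y, signalDensity μ ζ V y = 0 := by
  refine (intervalIntegral.integral_congr fun y hy => ?_).trans intervalIntegral.integral_zero
  rw [uIcc_of_le hY₀] at hy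
  exact if_neg fun hy' => (hy.2.trans hY).not_gt hy'.1

theorem integral_signalDensity_of_lt (hζ : 0 ≤ ζ) (hV : V ≠ 0) {Y : ℝ}
    (hc₀Y : cos (π / μ) ^ 2 * ζ / V ^ 2 < Y) (hY : Y < ζ / V ^ 2) :
    ∫ y in (0 : ℝ)..Y, signalDensity μ ζ V y
      = (μ : ℝ) / 2 * (arcsineCDF (ζ / V ^ 2) Y
          - arcsineCDF (ζ / V ^ 2) (cos (π / μ) ^ 2 * ζ / V ^ 2)) := by
  set c₀ := cos (π / μ) ^ 2 * ζ / V ^ 2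
  have hc₀ : 0 ≤ c₀ := by positivity
  have hint : Integrable (signalDensity μ ζ V) := by
    rw [signalDensity_eq_indicator hζ, integrable_indicator_iff measurableSet_Ioo]
    exact ((integrable_interferenceDensity hV).const_mul _).integrableOn
  have hsignal : ∫ y in c₀..Y, signalDensity μ ζ V y
      = ∫ y in c₀..Y, (μ : ℝ) / 2 * interferenceDensity ζ V y := by
    refine intervalIntegral.integral_congr_ae (Filter.Eventually.of_forall fun y hy => ?_)
    rw [uIoc_of_le hc₀Y.le] at hy
    rw [signalDensity_eq_indicator hζ, indicator_of_mem
      (show y ∈ Ioo c₀ (ζ / V ^ 2) from ⟨hy.1, hy.2.trans_lt hY⟩)]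
  rw [← intervalIntegral.integral_add_adjacent_intervals (b := c₀) hint.intervalIntegrable
    hint.intervalIntegrable, integral_signalDensity_of_le hc₀ le_rfl, zero_add, hsignal,
    intervalIntegral.integral_const_mul, integral_interferenceDensity hV hc₀ hc₀Y.le hY.le]

end signal

theorem cuma_cdf_gap_general (μ : ℕ) (hμ2 : 2 ≤ μ)
    (ζ V : ℝ) (hζ : 0 < ζ) (hV : 0 < V) :
    (∀ Y : ℝ, 0 < Y → Y ≤ Real.cos (π / μ) ^ 2 * ζ / V ^ 2 →
      (∫ y in (0 : ℝ)..Y, interferenceDensity ζ V y)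
          - (∫ y in (0 : ℝ)..Y, signalDensity μ ζ V y)
        = ∫ y in (0 : ℝ)..Y, interferenceDensity ζ V y) ∧
    (∀ Y : ℝ, Real.cos (π / μ) ^ 2 * ζ / V ^ 2 < Y → Y < ζ / V ^ 2 →
      (∫ y in (0 : ℝ)..Y, interferenceDensity ζ V y)
          - (∫ y in (0 : ℝ)..Y, signalDensity μ ζ V y)
        = ((μ : ℝ) / 2 - 1) * ∫ y in Y..(ζ / V ^ 2), interferenceDensity ζ V y) ∧
    (∀ Y : ℝ, 0 < Y → Y < ζ / V ^ 2 →
      0 ≤ (∫ y in (0 : ℝ)..Y, interferenceDensity ζ V y)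
          - ∫ y in (0 : ℝ)..Y, signalDensity μ ζ V y) := by
  have hμ : (2 : ℝ) ≤ μ := by exact_mod_cast hμ2
  have hb : ζ / V ^ 2 ≠ 0 := by positivity
  have hG₀ : arcsineCDF (ζ / V ^ 2) (cos (π / μ) ^ 2 * ζ / V ^ 2) = 1 - 2 / μ := by
    rw [mul_div_assoc, arcsineCDF_cos_sq_mul hb (by positivity)
      (div_le_div_of_nonneg_left pi_pos.le two_pos hμ)]
    field_simp
  have below (Y : ℝ) (hY₀ : 0 < Y) (hY : Y ≤ cos (π / μ) ^ 2 * ζ / V ^ 2) :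
      (∫ y in (0 : ℝ)..Y, interferenceDensity ζ V y)
          - (∫ y in (0 : ℝ)..Y, signalDensity μ ζ V y)
        = ∫ y in (0 : ℝ)..Y, interferenceDensity ζ V y := by
    rw [integral_signalDensity_of_le hY₀.le hY, sub_zero]
  have above (Y : ℝ) (hc₀Y : cos (π / μ) ^ 2 * ζ / V ^ 2 < Y) (hY : Y < ζ / V ^ 2) :
      (∫ y in (0 : ℝ)..Y, interferenceDensity ζ V y)
          - (∫ y in (0 : ℝ)..Y, signalDensity μ ζ V y)
        = ((μ : ℝ) / 2 - 1) * ∫ y in Y..(ζ / V ^ 2), interferenceDensity ζ V y := by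
    have hY₀ : 0 ≤ Y := (by positivity : 0 ≤ cos (π / μ) ^ 2 * ζ / V ^ 2).trans hc₀Y.le
    rw [integral_signalDensity_of_lt hζ.le hV.ne' hc₀Y hY, hG₀,
      integral_interferenceDensity hV.ne' le_rfl hY₀ hY.le,
      integral_interferenceDensity hV.ne' hY₀ hY.le le_rfl, arcsineCDF_zero, arcsineCDF_self hb]
    field_simp
    ring
  refine ⟨below, above, fun Y hY₀ hY => ?_⟩
  rcases le_or_gt Y (cos (π / μ) ^ 2 * ζ / V ^ 2) with hYc₀ | hc₀Y
  · rw [below Y hY₀ hYc₀]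
    exact intervalIntegral.integral_nonneg hY₀.le fun y _ => interferenceDensity_nonneg ζ V y
  · rw [above Y hc₀Y hY]
    exact mul_nonneg (by linarith)
      (intervalIntegral.integral_nonneg hY.le fun y _ => interferenceDensity_nonneg ζ V y)

/-- Theorem 8: the CDF gap between the per-user interference power and the CUMA
signal power, with `c₀ = cos²(π/μ)·ζ/V²`:
(i) for `0 < Y ≤ c₀`, `F_Y(Y) − F_α(Y) = ∫_0^Y f_Y`;
(ii) for `c₀ < Y < ζ/V²`, `F_Y(Y) − F_α(Y) = (μ/2 − 1)·∫_Y^{ζ/V²} f_Y`;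
and in both cases the gap is nonnegative. -/
theorem cuma_cdf_gap (μ : ℕ) (hμ2 : 2 ≤ μ) (hμe : Even μ)
    (ζ V : ℝ) (hζ : 0 < ζ) (hV : 0 < V) :
    (∀ Y : ℝ, 0 < Y → Y ≤ Real.cos (π / μ) ^ 2 * ζ / V ^ 2 →
      (∫ y in (0 : ℝ)..Y, interferenceDensity ζ V y)
          - (∫ y in (0 : ℝ)..Y, signalDensity μ ζ V y)
        = ∫ y in (0 : ℝ)..Y, interferenceDensity ζ V y) ∧
    (∀ Y : ℝ, Real.cos (π / μ) ^ 2 * ζ / V ^ 2 < Y → Y < ζ / V ^ 2 →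
      (∫ y in (0 : ℝ)..Y, interferenceDensity ζ V y)
          - (∫ y in (0 : ℝ)..Y, signalDensity μ ζ V y)
        = ((μ : ℝ) / 2 - 1) * ∫ y in Y..(ζ / V ^ 2), interferenceDensity ζ V y) ∧
    (∀ Y : ℝ, 0 < Y → Y < ζ / V ^ 2 →
      0 ≤ (∫ y in (0 : ℝ)..Y, interferenceDensity ζ V y)
          - ∫ y in (0 : ℝ)..Y, signalDensity μ ζ V y) :=
  cuma_cdf_gap_general μ hμ2 ζ V hζ hV
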